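/- (Monotone approach to the limit interface.) Let δₙ = τ2^{−n} and let φ_t^{δ,−}, φ_t^{δ,+} be the delta interface evolutions from a fixed initial φ (1-Lipschitz, ≥ |r|, = |r| outside a compact). Then for every t in the dyadic grid and every n: φ_t^{δₙ,−} ≤ φ_t^{δ_{n+1},−} ≤ φ_t^{δₙ,+}. Consequently φ_t^{δₙ,−}(r) converges pointwise as n → ∞, and since all φ_t^{δ,±} are 1-Lipschitz in r, the convergence is uniform and the limit φ_t is 1-Lipschitz. -/

import Mathlib

open MeasureTheory

/-- The Gaussian heat kernel. -/
noncomputable def gaussK (t r r' : ℝ) : ℝ :=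
  Real.exp (-(r - r') ^ 2 / (2 * t)) / Real.sqrt (2 * Real.pi * t)

/-- The heat semigroup applied to an interface. -/
noncomputable def heatEvol (t : ℝ) (f : ℝ → ℝ) (r : ℝ) : ℝ :=
  ∫ r', gaussK t r r' * f r'

/-- The delta⁻ interface evolution sampled at times `kδ`. -/
noncomputable def deltaMinus (j δ : ℝ) (φ : ℝ → ℝ) : ℕ → ℝ → ℝ
  | 0 => φ
  | k + 1 => fun r =>
      max (heatEvol δ (deltaMinus j δ φ k) r) (|r| + ((k : ℝ) + 1) * j * δ)

/-- The delta⁺ interface evolution sampled at times `kδ`. -/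
noncomputable def deltaPlus (j δ : ℝ) (φ : ℝ → ℝ) : ℕ → ℝ → ℝ
  | 0 => fun r => max (φ r) (|r| + j * δ)
  | k + 1 => fun r =>
      max (heatEvol δ (deltaPlus j δ φ k) r) (|r| + ((k : ℝ) + 2) * j * δ)

/-!
The heat semigroup is integration against a centred Gaussian, so it is monotone, commutes with
adding constants, preserves 1-Lipschitz functions, satisfies `G_s ∘ G_t = G_(s+t)` (Gaussians
convolve to Gaussians) and, the Gaussian having mean zero, lies above every cone `|r| + c`.
By induction on `k` this gives `φ^{δ,-}_k ≤ φ^{δ/2,-}_{2k} ≤ φ^{δ,+}_k ≤ φ^{δ,-}_k + jδ`: one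
δ-step of heat flow is two δ/2-steps, and the finer scheme only adds a cone in between, which the
coarse plus-scheme already dominates. Along the dyadic sequence consecutive lower barriers thus
differ by at most `jτ 2^{-(m+n)}`, which is summable, so the telescoping series converges
uniformly; 1-Lipschitz functions form a closed set for pointwise convergence.
-/

open ProbabilityTheory

lemma LipschitzWith.integrable_of_integrable_id {μ : Measure ℝ} [IsFiniteMeasure μ]
    (hμ : Integrable id μ) {K : NNReal} {f : ℝ → ℝ} (hf : LipschitzWith K f) : Integrable f μ := by
  refine ((integrable_const |f 0|).add (hμ.norm.const_mul K)).mono'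
    hf.continuous.aestronglyMeasurable (ae_of_all _ fun x => ?_)
  have := hf.dist_le_mul x 0
  simp only [Real.dist_eq, sub_zero, Real.norm_eq_abs, Pi.add_apply, id] at this ⊢
  linarith [abs_sub_abs_le_abs_sub (f x) (f 0)]

lemma integral_conv_eq_integral_integral {G E : Type*} [AddMonoid G] [MeasurableSpace G]
    [MeasurableAdd₂ G] [NormedAddCommGroup E] [NormedSpace ℝ E] {μ ν : Measure G} [SFinite μ]
    [SFinite ν] {g : G → E} (hg : Integrable g (μ ∗ ν)) :
    ∫ x, g x ∂(μ ∗ ν) = ∫ u, ∫ z, g (u + z) ∂ν ∂μ := by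
  have hadd : AEMeasurable (fun p : G × G => p.1 + p.2) (μ.prod ν) := measurable_add.aemeasurable
  rw [Measure.conv] at hg ⊢
  rw [integral_map hadd hg.aestronglyMeasurable]
  exact integral_prod (fun p => g (p.1 + p.2))
    ((integrable_map_measure hg.aestronglyMeasurable hadd).1 hg)

lemma integrable_id_gaussianReal (m : ℝ) (v : NNReal) : Integrable id (gaussianReal m v) :=
  memLp_one_iff_integrable.1 (memLp_id_gaussianReal 1)

lemma lipschitzWith_abs : LipschitzWith 1 (fun x : ℝ => |x|) := lipschitzWith_one_norm

lemma lipschitzWith_abs_add_const (c : ℝ) : LipschitzWith 1 (fun r : ℝ => |r| + c) := by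
  simpa using lipschitzWith_abs.add (LipschitzWith.const c)

section Heat

variable {t : ℝ} {K : NNReal} {f g : ℝ → ℝ}

lemma heatEvol_eq_integral_gaussianReal (ht : 0 < t) (f : ℝ → ℝ) (r : ℝ) :
    heatEvol t f r = ∫ z, f (r + z) ∂gaussianReal 0 t.toNNReal := by
  have hv : t.toNNReal ≠ 0 := by simpa using ht
  have hshift : ∫ z, f (r + z) ∂gaussianReal 0 t.toNNReal
      = ∫ x, f x ∂(gaussianReal 0 t.toNNReal).map (r + ·) :=
    (integral_map_equiv (Homeomorph.addLeft r).toMeasurableEquiv f).symm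
  rw [hshift, gaussianReal_map_const_add, integral_gaussianReal_eq_integral_smul hv, heatEvol]
  congr 1 with x
  rw [gaussK, gaussianPDFReal, Real.coe_toNNReal _ ht.le, smul_eq_mul, zero_add, div_eq_inv_mul]
  ring_nf

lemma LipschitzWith.integrable_comp_add_gaussianReal (hf : LipschitzWith K f) (v : NNReal) (r : ℝ) :
    Integrable (fun z => f (r + z)) (gaussianReal 0 v) :=
  (hf.comp (isometry_add_left r).lipschitz).integrable_of_integrable_id
    (integrable_id_gaussianReal 0 v)

lemma heatEvol_mono (ht : 0 < t) {K' : NNReal} (hf : LipschitzWith K f) (hg : LipschitzWith K' g)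
    (hfg : f ≤ g) : heatEvol t f ≤ heatEvol t g := fun r => by
  simp only [heatEvol_eq_integral_gaussianReal ht]
  exact integral_mono (hf.integrable_comp_add_gaussianReal _ r)
    (hg.integrable_comp_add_gaussianReal _ r) fun z => hfg (r + z)

lemma heatEvol_add_const (ht : 0 < t) (hf : LipschitzWith K f) (c r : ℝ) :
    heatEvol t (fun x => f x + c) r = heatEvol t f r + c := by
  simp only [heatEvol_eq_integral_gaussianReal ht]
  rw [integral_add (hf.integrable_comp_add_gaussianReal _ r) (integrable_const c), integral_const,
    probReal_univ, one_smul]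

lemma LipschitzWith.heatEvol (ht : 0 < t) (hf : LipschitzWith K f) :
    LipschitzWith K (heatEvol t f) := by
  refine LipschitzWith.of_dist_le_mul fun r s => ?_
  simp only [heatEvol_eq_integral_gaussianReal ht, Real.dist_eq]
  rw [← integral_sub (hf.integrable_comp_add_gaussianReal _ r)
    (hf.integrable_comp_add_gaussianReal _ s)]
  calc |∫ z, (f (r + z) - f (s + z)) ∂gaussianReal 0 t.toNNReal|
      ≤ ∫ z, |f (r + z) - f (s + z)| ∂gaussianReal 0 t.toNNReal := abs_integral_le_integral_abs
    _ ≤ ∫ _, K * |r - s| ∂gaussianReal 0 t.toNNReal := by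
        refine integral_mono (((hf.integrable_comp_add_gaussianReal _ r).sub
          (hf.integrable_comp_add_gaussianReal _ s)).abs) (integrable_const _) fun z => ?_
        simpa [Real.dist_eq] using hf.dist_le_mul (r + z) (s + z)
    _ = K * |r - s| := by simp

lemma abs_add_le_heatEvol_abs_add (ht : 0 < t) (c r : ℝ) :
    |r| + c ≤ heatEvol t (fun x => |x| + c) r := by
  have hmean : ∫ z, (r + z) ∂gaussianReal 0 t.toNNReal = r := by
    simpa [integral_id_gaussianReal] using
      integral_add (integrable_const r) (integrable_id_gaussianReal 0 t.toNNReal)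
  rw [heatEvol_add_const ht lipschitzWith_abs, heatEvol_eq_integral_gaussianReal ht,
    add_le_add_iff_right]
  calc |r| = |∫ z, (r + z) ∂gaussianReal 0 t.toNNReal| := by rw [hmean]
    _ ≤ _ := abs_integral_le_integral_abs

lemma heatEvol_heatEvol {s : ℝ} (hs : 0 < s) (ht : 0 < t) (hf : LipschitzWith K f) :
    heatEvol s (heatEvol t f) = heatEvol (s + t) f := funext fun r => by
  have hconv : gaussianReal 0 s.toNNReal ∗ gaussianReal 0 t.toNNReal
      = gaussianReal 0 (s + t).toNNReal := by
    rw [gaussianReal_conv_gaussianReal, Real.toNNReal_add hs.le ht.le, add_zero]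
  simp only [heatEvol_eq_integral_gaussianReal hs, heatEvol_eq_integral_gaussianReal ht,
    heatEvol_eq_integral_gaussianReal (add_pos hs ht), ← hconv]
  rw [integral_conv_eq_integral_integral]
  · simp only [add_assoc]
  · rw [hconv]; exact hf.integrable_comp_add_gaussianReal _ r

end Heat

section Delta

variable {j δ : ℝ} {φ : ℝ → ℝ}

lemma lipschitzWith_deltaMinus (hδ : 0 < δ) (hφ : LipschitzWith 1 φ) :
    ∀ k, LipschitzWith 1 (deltaMinus j δ φ k)
  | 0 => hφ
  | k + 1 => by
    rw [deltaMinus]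
    simpa only [max_self] using ((lipschitzWith_deltaMinus hδ hφ k).heatEvol hδ).max
      (lipschitzWith_abs_add_const (((k : ℝ) + 1) * j * δ))

lemma lipschitzWith_deltaPlus (hδ : 0 < δ) (hφ : LipschitzWith 1 φ) :
    ∀ k, LipschitzWith 1 (deltaPlus j δ φ k)
  | 0 => by
    rw [deltaPlus]
    simpa only [max_self] using hφ.max (lipschitzWith_abs_add_const (j * δ))
  | k + 1 => by
    rw [deltaPlus]
    simpa only [max_self] using ((lipschitzWith_deltaPlus hδ hφ k).heatEvol hδ).max
      (lipschitzWith_abs_add_const (((k : ℝ) + 2) * j * δ))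

lemma abs_add_le_deltaPlus : ∀ (k : ℕ) (r : ℝ), |r| + ((k : ℝ) + 1) * j * δ ≤ deltaPlus j δ φ k r
  | 0, r => by
    rw [deltaPlus, Nat.cast_zero, zero_add, one_mul]
    exact le_max_right _ _
  | k + 1, r => by
    rw [deltaPlus, Nat.cast_succ, add_assoc, one_add_one_eq_two]
    exact le_max_right _ _

lemma deltaPlus_le_deltaMinus_add (hjδ : 0 ≤ j * δ) (hδ : 0 < δ) (hφ : LipschitzWith 1 φ)
    (hge : ∀ r, |r| ≤ φ r) : ∀ k r, deltaPlus j δ φ k r ≤ deltaMinus j δ φ k r + j * δ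
  | 0, r => by
    rw [deltaPlus, deltaMinus]
    exact max_le (by linarith) (by linarith [hge r])
  | k + 1, r => by
    have hheat : heatEvol δ (deltaPlus j δ φ k) r ≤ heatEvol δ (deltaMinus j δ φ k) r + j * δ := by
      rw [← heatEvol_add_const hδ (lipschitzWith_deltaMinus hδ hφ k)]
      exact heatEvol_mono hδ (lipschitzWith_deltaPlus hδ hφ k)
        ((lipschitzWith_deltaMinus hδ hφ k).add (LipschitzWith.const _))
        (deltaPlus_le_deltaMinus_add hjδ hδ hφ hge k) r
    rw [deltaPlus, deltaMinus, ← max_add_add_right]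
    exact max_le_max hheat (le_of_eq (by ring))

lemma deltaMinus_le_deltaMinus_half (hδ : 0 < δ) (hφ : LipschitzWith 1 φ) :
    ∀ k, deltaMinus j δ φ k ≤ deltaMinus j (δ / 2) φ (2 * k)
  | 0 => le_rfl
  | k + 1 => fun r => by
    have hδ2 : 0 < δ / 2 := half_pos hδ
    have hlip := lipschitzWith_deltaMinus (j := j) hδ hφ
    have hlip2 := lipschitzWith_deltaMinus (j := j) hδ2 hφ
    have hheat : heatEvol δ (deltaMinus j δ φ k)
        ≤ heatEvol (δ / 2) (deltaMinus j (δ / 2) φ (2 * k + 1)) :=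
      calc heatEvol δ (deltaMinus j δ φ k)
          = heatEvol (δ / 2) (heatEvol (δ / 2) (deltaMinus j δ φ k)) := by
            rw [heatEvol_heatEvol hδ2 hδ2 (hlip k), add_halves]
        _ ≤ heatEvol (δ / 2) (heatEvol (δ / 2) (deltaMinus j (δ / 2) φ (2 * k))) :=
            heatEvol_mono hδ2 ((hlip k).heatEvol hδ2) ((hlip2 _).heatEvol hδ2)
              (heatEvol_mono hδ2 (hlip k) (hlip2 _) (deltaMinus_le_deltaMinus_half hδ hφ k))
        _ ≤ heatEvol (δ / 2) (deltaMinus j (δ / 2) φ (2 * k + 1)) :=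
            heatEvol_mono hδ2 ((hlip2 _).heatEvol hδ2) (hlip2 _) fun x => le_max_left _ _
    rw [show 2 * (k + 1) = 2 * k + 1 + 1 by ring, deltaMinus, deltaMinus]
    exact max_le_max (hheat r) (le_of_eq (by push_cast; ring))

lemma deltaMinus_half_le_deltaPlus (hjδ : 0 ≤ j * δ) (hδ : 0 < δ) (hφ : LipschitzWith 1 φ) :
    ∀ k, deltaMinus j (δ / 2) φ (2 * k) ≤ deltaPlus j δ φ k
  | 0 => fun r => le_max_left _ _
  | k + 1 => fun r => by
    have hδ2 : 0 < δ / 2 := half_pos hδ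
    have hlip2 := lipschitzWith_deltaMinus (j := j) hδ2 hφ
    have hlipP := lipschitzWith_deltaPlus (j := j) hδ hφ
    have hcone (x : ℝ) : |x| + (((2 * k : ℕ) : ℝ) + 1) * j * (δ / 2)
        ≤ heatEvol (δ / 2) (deltaPlus j δ φ k) x :=
      calc |x| + (((2 * k : ℕ) : ℝ) + 1) * j * (δ / 2) ≤ |x| + ((k : ℝ) + 1) * j * δ := by
            push_cast; nlinarith
        _ ≤ heatEvol (δ / 2) (fun y => |y| + ((k : ℝ) + 1) * j * δ) x :=
            abs_add_le_heatEvol_abs_add hδ2 _ x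
        _ ≤ heatEvol (δ / 2) (deltaPlus j δ φ k) x :=
            heatEvol_mono hδ2 (lipschitzWith_abs_add_const _) (hlipP k) (abs_add_le_deltaPlus k) x
    have hodd : deltaMinus j (δ / 2) φ (2 * k + 1) ≤ heatEvol (δ / 2) (deltaPlus j δ φ k) :=
      fun x => max_le
        (heatEvol_mono hδ2 (hlip2 _) (hlipP k) (deltaMinus_half_le_deltaPlus hjδ hδ hφ k) x)
        (hcone x)
    rw [show 2 * (k + 1) = 2 * k + 1 + 1 by ring, deltaMinus, deltaPlus]
    refine max_le_max ?_ (by push_cast; nlinarith)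
    calc heatEvol (δ / 2) (deltaMinus j (δ / 2) φ (2 * k + 1)) r
        ≤ heatEvol (δ / 2) (heatEvol (δ / 2) (deltaPlus j δ φ k)) r :=
          heatEvol_mono hδ2 (hlip2 _) ((hlipP k).heatEvol hδ2) hodd r
      _ = heatEvol δ (deltaPlus j δ φ k) r := by
          rw [heatEvol_heatEvol hδ2 hδ2 (hlipP k), add_halves]

lemma abs_deltaMinus_half_sub_le (hj : 0 ≤ j) (hδ : 0 < δ) (hφ : LipschitzWith 1 φ)
    (hge : ∀ r, |r| ≤ φ r) (k : ℕ) (r : ℝ) :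
    |deltaMinus j (δ / 2) φ (2 * k) r - deltaMinus j δ φ k r| ≤ j * δ := by
  have hjδ : 0 ≤ j * δ := mul_nonneg hj hδ.le
  have hlow := deltaMinus_le_deltaMinus_half (j := j) hδ hφ k r
  have hup := deltaMinus_half_le_deltaPlus hjδ hδ hφ k r
  have hgap := deltaPlus_le_deltaMinus_add hjδ hδ hφ hge k r
  rw [abs_le]
  constructor <;> linarith

end Delta

lemma exists_tendstoUniformly_of_abs_sub_le {α : Type*} {F : ℕ → α → ℝ} {u : ℕ → ℝ}
    (hu : Summable u) (hF : ∀ n x, |F (n + 1) x - F n x| ≤ u n) :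
    ∃ ψ, TendstoUniformly F ψ Filter.atTop := by
  have hsum := tendstoUniformly_tsum_nat (f := fun n x => F (n + 1) x - F n x) hu hF
  refine ⟨fun x => F 0 x + ∑' n, (F (n + 1) x - F n x),
    Metric.tendstoUniformly_iff.2 fun ε hε => ?_⟩
  filter_upwards [Metric.tendstoUniformly_iff.1 hsum ε hε] with N hN x
  have := hN x
  rwa [Finset.sum_range_sub (fun n => F n x), ← dist_add_left (F 0 x), add_sub_cancel] at this

lemma lipschitzWith_of_tendsto {α β ι : Type*} [PseudoEMetricSpace α] [PseudoEMetricSpace β]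
    {l : Filter ι} [l.NeBot] {K : NNReal} {F : ι → α → β} {ψ : α → β}
    (hF : ∀ i, LipschitzWith K (F i)) (hψ : ∀ x, Filter.Tendsto (fun i => F i x) l (nhds (ψ x))) :
    LipschitzWith K ψ :=
  (isClosed_setOfPred_lipschitzWith K).mem_of_tendsto (tendsto_pi_nhds.2 hψ)
    (Filter.Eventually.of_forall hF)

theorem delta_monotone_approach_general (j τ : ℝ) (hj : 0 < j) (hτ : 0 < τ)
    (φ : ℝ → ℝ) (hlip : LipschitzWith 1 φ) (hge : ∀ r : ℝ, |r| ≤ φ r) :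
    (∀ (n k : ℕ) (r : ℝ),
      deltaMinus j (τ / 2 ^ n) φ k r ≤ deltaMinus j (τ / 2 ^ (n + 1)) φ (2 * k) r ∧
      deltaMinus j (τ / 2 ^ (n + 1)) φ (2 * k) r ≤ deltaPlus j (τ / 2 ^ n) φ k r) ∧
    (∀ m k : ℕ, ∃ ψ : ℝ → ℝ, LipschitzWith 1 ψ ∧
      TendstoUniformly (fun n : ℕ => deltaMinus j (τ / 2 ^ (m + n)) φ (k * 2 ^ n))
        ψ Filter.atTop) := by
  have hδ : ∀ n : ℕ, 0 < τ / 2 ^ n := fun n => by positivity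
  have hhalf : ∀ n : ℕ, τ / 2 ^ (n + 1) = τ / 2 ^ n / 2 := fun n => by rw [pow_succ, div_div]
  refine ⟨fun n k r => hhalf n ▸ ⟨deltaMinus_le_deltaMinus_half (hδ n) hlip k r,
    deltaMinus_half_le_deltaPlus (mul_pos hj (hδ n)).le (hδ n) hlip k r⟩, fun m k => ?_⟩
  have hstep : ∀ n r, |deltaMinus j (τ / 2 ^ (m + (n + 1))) φ (k * 2 ^ (n + 1)) r
      - deltaMinus j (τ / 2 ^ (m + n)) φ (k * 2 ^ n) r| ≤ j * τ / 2 ^ m * (1 / 2) ^ n := by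
    intro n r
    rw [← add_assoc, hhalf, show k * 2 ^ (n + 1) = 2 * (k * 2 ^ n) by ring]
    refine (abs_deltaMinus_half_sub_le hj.le (hδ (m + n)) hlip hge (k * 2 ^ n) r).trans_eq ?_
    rw [pow_add, one_div_pow]
    field_simp
  obtain ⟨ψ, hψ⟩ := exists_tendstoUniformly_of_abs_sub_le
    (F := fun n => deltaMinus j (τ / 2 ^ (m + n)) φ (k * 2 ^ n))
    (summable_geometric_two.mul_left _) hstep
  exact ⟨ψ, lipschitzWith_of_tendsto (fun n => lipschitzWith_deltaMinus (hδ _) hlip _)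
    hψ.tendsto_at, hψ⟩

/-- (Monotone approach to the limit interface.) With `δₙ = τ2^{-n}`, at every
dyadic time: the δₙ⁻ evolution is below the δₙ₊₁⁻ evolution, which is below the
δₙ⁺ evolution; consequently, at any fixed dyadic time `t = k·τ2^{-m}`, the lower
barriers converge uniformly as `n → ∞` to a 1-Lipschitz limit. -/
theorem delta_monotone_approach (j τ : ℝ) (hj : 0 < j) (hτ : 0 < τ)
    (φ : ℝ → ℝ) (hlip : LipschitzWith 1 φ) (hge : ∀ r : ℝ, |r| ≤ φ r)
    (hcone : ∃ M : ℝ, ∀ r : ℝ, M ≤ |r| → φ r = |r|) :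
    (∀ (n k : ℕ) (r : ℝ),
      deltaMinus j (τ / 2 ^ n) φ k r ≤ deltaMinus j (τ / 2 ^ (n + 1)) φ (2 * k) r ∧
      deltaMinus j (τ / 2 ^ (n + 1)) φ (2 * k) r ≤ deltaPlus j (τ / 2 ^ n) φ k r) ∧
    (∀ m k : ℕ, ∃ ψ : ℝ → ℝ, LipschitzWith 1 ψ ∧
      TendstoUniformly (fun n : ℕ => deltaMinus j (τ / 2 ^ (m + n)) φ (k * 2 ^ n))
        ψ Filter.atTop) :=
  delta_monotone_approach_general j τ hj hτ φ hlip hge
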